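/- Let N = (Q, s, δ, F) be an NFA (over a finite linearly ordered alphabet Σ, single initial state s, every state reachable from s, every state able to reach a final state), let ≤ be a co-lex order on N, and let α be a word. Define S(α) = {u ∈ Q | β ≺ α for every β ∈ I_u} and L(α) = {u ∈ Q | α ≺ β for every β ∈ I_u}. Then: (1) if u ≤ v and v ∈ S(α), then u ∈ S(α) (S(α) is downward closed); (2) if u ≤ v and u ∈ L(α), then v ∈ L(α) (L(α) is upward closed); (3) the sets I_α, S(α) and L(α) are pairwise disjoint; (4) for every v ∈ I_α: if u < v then u ∈ I_α ∪ S(α), and if v < z then z ∈ I_α ∪ L(α). -/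

import Mathlib

/-- Strict co-lexicographic order on words: compare reversed words lexicographically. -/
def colexLt {A : Type} [LinearOrder A] (α β : List A) : Prop :=
  List.Lex (· < ·) α.reverse β.reverse

/-- Co-lexicographic order (reflexive version). -/
def colexLe {A : Type} [LinearOrder A] (α β : List A) : Prop :=
  colexLt α β ∨ α = β

/-- The prefix closure of a language. -/
def Pref {A : Type} (L : Set (List A)) : Set (List A) :=
  {α | ∃ γ : List A, α ++ γ ∈ L}

/-- The Myhill–Nerode equivalence of a language. -/
def NerodeEq {A : Type} (L : Set (List A)) (α β : List A) : Prop :=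
  ∀ γ : List A, α ++ γ ∈ L ↔ β ++ γ ∈ L

/-- A monotone (nondecreasing or nonincreasing) sequence of words w.r.t. co-lex order. -/
def MonotoneSeq {A : Type} [LinearOrder A] (α : ℕ → List A) : Prop :=
  (∀ i, colexLe (α i) (α (i + 1))) ∨ (∀ i, colexLe (α (i + 1)) (α i))

/-- A partition of the state set into `p` chains with respect to the relation `le`. -/
def IsChainPartition {Q : Type} (le : Q → Q → Prop) (p : ℕ) (f : Fin p → Set Q) : Prop :=
  (∀ q : Q, ∃! i : Fin p, q ∈ f i) ∧
  ∀ i : Fin p, ∀ u ∈ f i, ∀ v ∈ f i, le u v ∨ le v u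

/-- A nondeterministic finite automaton with a single initial state. -/
structure NFA' (A Q : Type) where
  start : Q
  delta : Q → A → Set Q
  accept : Set Q

namespace NFA'

variable {A Q : Type}

/-- Extended transition function on words. -/
def deltaStar (N : NFA' A Q) : Q → List A → Set Q
  | q, [] => {q}
  | q, a :: w => ⋃ r ∈ N.delta q a, N.deltaStar r w

/-- `N.Iw α` is the set of states reached from the initial state reading `α`. -/
def Iw (N : NFA' A Q) (α : List A) : Set Q :=
  N.deltaStar N.start α

/-- `N.Iq q` is the set of words reaching `q` from the initial state. -/
def Iq (N : NFA' A Q) (q : Q) : Set (List A) :=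
  {α | q ∈ N.Iw α}

/-- The accepted language. -/
def lang (N : NFA' A Q) : Set (List A) :=
  {α | ∃ q ∈ N.accept, q ∈ N.Iw α}

/-- Labels of transitions entering a state, with the extra bottom symbol `#`
added exactly for the initial state. -/
def lam (N : NFA' A Q) (q : Q) : Set (WithBot A) :=
  {x | ∃ (a : A) (u : Q), x = (a : WithBot A) ∧ q ∈ N.delta u a} ∪
    {x | q = N.start ∧ x = (⊥ : WithBot A)}

/-- Every state is reachable from the initial state. -/
def Reachable (N : NFA' A Q) : Prop :=
  ∀ q : Q, ∃ α : List A, q ∈ N.Iw α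

/-- Every state can reach a final state. -/
def Useful (N : NFA' A Q) : Prop :=
  ∀ q : Q, ∃ (β : List A) (f : Q), f ∈ N.accept ∧ f ∈ N.deltaStar q β

end NFA'

/-- A co-lex order on an NFA: a partial order on the states satisfying Axioms 1 and 2. -/
structure IsColexNFA {A Q : Type} [LinearOrder A] (N : NFA' A Q) (le : Q → Q → Prop) : Prop where
  refl : ∀ u, le u u
  antisymm : ∀ u v, le u v → le v u → u = v
  trans : ∀ u v w, le u v → le v w → le u w
  ax1 : ∀ u v, le u v → u ≠ v → ∀ a ∈ N.lam u, ∀ b ∈ N.lam v, a ≤ b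
  ax2 : ∀ (a : A) (u v u' v' : Q),
      u ∈ N.delta u' a → v ∈ N.delta v' a → le u v → u ≠ v → le u' v'

/-- `S(α)`: states all of whose incoming words are co-lex smaller than `α`. -/
def SsetN {A Q : Type} [LinearOrder A] (N : NFA' A Q) (α : List A) : Set Q :=
  {u | ∀ β ∈ N.Iq u, colexLt β α}

/-- `L(α)`: states all of whose incoming words are co-lex larger than `α`. -/
def LsetN {A Q : Type} [LinearOrder A] (N : NFA' A Q) (α : List A) : Set Q :=
  {u | ∀ β ∈ N.Iq u, colexLt α β}

section Aux

variable {A Q : Type} [LinearOrder A]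

lemma colexLt_trans {a b c : List A} (h1 : colexLt a b) (h2 : colexLt b c) : colexLt a c :=
  List.lex_trans (fun h h' => lt_trans h h') h1 h2

lemma colexLt_irrefl (a : List A) : ¬ colexLt a a := fun h =>
  irrefl_of (List.Lex ((· < ·) : A → A → Prop)) a.reverse h

lemma colex_trichot (a b : List A) : colexLt a b ∨ a = b ∨ colexLt b a := by
  rcases trichotomous_of (List.Lex ((· < ·) : A → A → Prop)) a.reverse b.reverse with h | h | h
  · exact Or.inl h
  · exact Or.inr (Or.inl (List.reverse_injective h))
  · exact Or.inr (Or.inr h)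

lemma not_colexLt_nil (a : List A) : ¬ colexLt a [] := by
  intro h
  unfold colexLt at h
  rw [List.reverse_nil] at h
  exact List.not_lex_nil h

lemma nil_colexLe (a : List A) : colexLe [] a := by
  rcases List.lex_nil_or_eq_nil (r := ((· < ·) : A → A → Prop)) a.reverse with h | h
  · exact Or.inl (by simpa [colexLt] using h)
  · right
    have : a = [] := by simpa using congrArg List.reverse h
    exact this.symm

lemma colexLt_of_le_of_lt {a b c : List A} (h1 : colexLe a b) (h2 : colexLt b c) : colexLt a c := by
  rcases h1 with h | rfl
  · exact colexLt_trans h h2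
  · exact h2

lemma colexLt_of_lt_of_le {a b c : List A} (h1 : colexLt a b) (h2 : colexLe b c) : colexLt a c := by
  rcases h2 with h | rfl
  · exact colexLt_trans h1 h
  · exact h1

lemma colexLe_trans {a b c : List A} (h1 : colexLe a b) (h2 : colexLe b c) : colexLe a c := by
  rcases h1 with h | rfl
  · exact Or.inl (colexLt_of_lt_of_le h h2)
  · exact h2

lemma colexLt_concat_iff {x y : List A} {a b : A} :
    colexLt (x ++ [a]) (y ++ [b]) ↔ a < b ∨ (a = b ∧ colexLt x y) := by
  unfold colexLt
  rw [List.reverse_append, List.reverse_append]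
  simp only [List.reverse_singleton, List.singleton_append]
  constructor
  · intro h
    cases h with
    | cons h => exact Or.inr ⟨rfl, h⟩
    | rel h => exact Or.inl h
  · rintro (h | ⟨rfl, h⟩)
    · exact List.Lex.rel h
    · exact List.Lex.cons h

lemma colexLe_concat_iff {x y : List A} {a : A} :
    colexLe (x ++ [a]) (y ++ [a]) ↔ colexLe x y := by
  unfold colexLe
  rw [colexLt_concat_iff, List.append_left_inj]
  constructor
  · rintro ((h | ⟨-, h⟩) | h)
    · exact absurd h (lt_irrefl a)
    · exact Or.inl h
    · exact Or.inr h
  · rintro (h | h)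
    · exact Or.inl (Or.inr ⟨rfl, h⟩)
    · exact Or.inr h

lemma mem_deltaStar_append {N : NFA' A Q} {q u : Q} {x y : List A} :
    u ∈ N.deltaStar q (x ++ y) ↔ ∃ r, r ∈ N.deltaStar q x ∧ u ∈ N.deltaStar r y := by
  induction x generalizing q with
  | nil => simp [NFA'.deltaStar]
  | cons a x ih =>
    simp only [List.cons_append, NFA'.deltaStar, Set.mem_iUnion, exists_prop]
    constructor
    · rintro ⟨r, hr, hu⟩
      obtain ⟨r', hr', hu'⟩ := ih.mp hu
      exact ⟨r', ⟨r, hr, hr'⟩, hu'⟩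
    · rintro ⟨r', ⟨r, hr, hr'⟩, hu'⟩
      exact ⟨r, hr, ih.mpr ⟨r', hr', hu'⟩⟩

lemma mem_Iw_concat {N : NFA' A Q} {u : Q} {β : List A} {a : A} :
    u ∈ N.Iw (β ++ [a]) ↔ ∃ u', u' ∈ N.Iw β ∧ u ∈ N.delta u' a := by
  unfold NFA'.Iw
  rw [mem_deltaStar_append]
  simp [NFA'.deltaStar]

lemma mem_Iw_nil {N : NFA' A Q} {u : Q} : u ∈ N.Iw ([] : List A) ↔ u = N.start := by
  simp [NFA'.Iw, NFA'.deltaStar]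

lemma mem_lam_of_delta {N : NFA' A Q} {u' u : Q} {a : A} (h : u ∈ N.delta u' a) :
    (a : WithBot A) ∈ N.lam u := Or.inl ⟨a, u', rfl, h⟩

lemma bot_mem_lam_start {N : NFA' A Q} : (⊥ : WithBot A) ∈ N.lam N.start := Or.inr ⟨rfl, rfl⟩

lemma not_le_start {N : NFA' A Q} {le : Q → Q → Prop} (hc : IsColexNFA N le) {u v u' : Q} {a : A}
    (hle : le u v) (hne : u ≠ v) (hu : u ∈ N.delta u' a) (hv : v = N.start) : False := by
  have h := hc.ax1 u v hle hne _ (mem_lam_of_delta hu) ⊥ (hv ▸ bot_mem_lam_start)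
  exact WithBot.not_coe_le_bot a h

lemma lam_le {N : NFA' A Q} {le : Q → Q → Prop} (hc : IsColexNFA N le) {u v u' v' : Q} {a b : A}
    (hle : le u v) (hne : u ≠ v) (hu : u ∈ N.delta u' a) (hv : v ∈ N.delta v' b) : a ≤ b :=
  WithBot.coe_le_coe.mp
    (hc.ax1 u v hle hne _ (mem_lam_of_delta hu) _ (mem_lam_of_delta hv))

/-- Key lemma 1: if `u ≤ v` and some word `β ∈ I_u` with `α ⪯ β`, then there is
`γ ∈ I_v` with `α ⪯ γ`. -/
lemma keyL1 {N : NFA' A Q} (hreach : N.Reachable) {le : Q → Q → Prop}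
    (hc : IsColexNFA N le) :
    ∀ (β : List A) (u v : Q) (α : List A), le u v → u ∈ N.Iw β → colexLe α β →
      ∃ γ, v ∈ N.Iw γ ∧ colexLe α γ := by
  intro β
  induction β using List.reverseRecOn with
  | nil =>
    intro u v α _ _ hαβ
    have hα : α = [] := by
      rcases hαβ with h | h
      · exact absurd h (not_colexLt_nil α)
      · exact h
    obtain ⟨γ, hγ⟩ := hreach v
    exact ⟨γ, hγ, hα ▸ nil_colexLe γ⟩
  | append_singleton β' a ih =>
    intro u v α hle hu hαβ
    by_cases huv : u = v
    · exact ⟨β' ++ [a], huv ▸ hu, hαβ⟩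
    obtain ⟨u', hu', huu'⟩ := mem_Iw_concat.mp hu
    obtain ⟨δ0, hδ0⟩ := hreach v
    rcases δ0.eq_nil_or_concat' with rfl | ⟨γ', b, rfl⟩
    · exact (not_le_start hc hle huv huu' (mem_Iw_nil.mp hδ0)).elim
    obtain ⟨v', hv', hvv'⟩ := mem_Iw_concat.mp hδ0
    have hab : a ≤ b := lam_le hc hle huv huu' hvv'
    rcases hab.lt_or_eq with hlt | rfl
    · refine ⟨γ' ++ [b], hδ0, ?_⟩
      exact Or.inl (colexLt_of_le_of_lt hαβ (colexLt_concat_iff.mpr (Or.inl hlt)))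
    · have hle' : le u' v' := hc.ax2 a u v u' v' huu' hvv' hle huv
      rcases α.eq_nil_or_concat' with rfl | ⟨α', c, rfl⟩
      · exact ⟨γ' ++ [a], hδ0, nil_colexLe _⟩
      rcases lt_trichotomy c a with hca | rfl | hca
      · exact ⟨γ' ++ [a], hδ0, Or.inl (colexLt_concat_iff.mpr (Or.inl hca))⟩
      · have hαβ' : colexLe α' β' := colexLe_concat_iff.mp hαβ
        obtain ⟨γ'', hγ'', hαγ''⟩ := ih u' v' α' hle' hu' hαβ'
        exact ⟨γ'' ++ [c], mem_Iw_concat.mpr ⟨v', hγ'', hvv'⟩,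
          colexLe_concat_iff.mpr hαγ''⟩
      · have hβα : colexLt (β' ++ [a]) (α' ++ [c]) := colexLt_concat_iff.mpr (Or.inl hca)
        exact (colexLt_irrefl _ (colexLt_of_le_of_lt hαβ hβα)).elim

/-- Key lemma 2: if `u ≤ v` and some word `γ ∈ I_v` with `γ ⪯ α`, then there is
`β ∈ I_u` with `β ⪯ α`. -/
lemma keyL2 {N : NFA' A Q} (hreach : N.Reachable) {le : Q → Q → Prop}
    (hc : IsColexNFA N le) :
    ∀ (γ : List A) (u v : Q) (α : List A), le u v → v ∈ N.Iw γ → colexLe γ α →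
      ∃ β, u ∈ N.Iw β ∧ colexLe β α := by
  intro γ
  induction γ using List.reverseRecOn with
  | nil =>
    intro u v α hle hv _
    by_cases huv : u = v
    · exact ⟨[], mem_Iw_nil.mpr (huv.trans (mem_Iw_nil.mp hv)), nil_colexLe α⟩
    obtain ⟨β0, hβ0⟩ := hreach u
    rcases β0.eq_nil_or_concat' with rfl | ⟨β'', a, rfl⟩
    · exact absurd ((mem_Iw_nil.mp hβ0).trans (mem_Iw_nil.mp hv).symm) huv
    obtain ⟨u', _, huu'⟩ := mem_Iw_concat.mp hβ0
    exact (not_le_start hc hle huv huu' (mem_Iw_nil.mp hv)).elim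
  | append_singleton γ' b ih =>
    intro u v α hle hv hγα
    by_cases huv : u = v
    · exact ⟨γ' ++ [b], huv ▸ hv, hγα⟩
    obtain ⟨v', hv', hvv'⟩ := mem_Iw_concat.mp hv
    obtain ⟨β0, hβ0⟩ := hreach u
    rcases β0.eq_nil_or_concat' with rfl | ⟨β'', a, rfl⟩
    · exact ⟨[], hβ0, nil_colexLe α⟩
    obtain ⟨u', hu', huu'⟩ := mem_Iw_concat.mp hβ0
    have hab : a ≤ b := lam_le hc hle huv huu' hvv'
    rcases hab.lt_or_eq with hlt | rfl
    · refine ⟨β'' ++ [a], hβ0, ?_⟩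
      exact Or.inl (colexLt_of_lt_of_le (colexLt_concat_iff.mpr (Or.inl hlt)) hγα)
    · have hle' : le u' v' := hc.ax2 a u v u' v' huu' hvv' hle huv
      rcases α.eq_nil_or_concat' with rfl | ⟨α', c, rfl⟩
      · rcases hγα with h | h
        · exact absurd h (not_colexLt_nil _)
        · exact absurd h (by simp)
      rcases lt_trichotomy a c with hac | rfl | hac
      · exact ⟨β'' ++ [a], hβ0, Or.inl (colexLt_concat_iff.mpr (Or.inl hac))⟩
      · have hγα' : colexLe γ' α' := colexLe_concat_iff.mp hγα
        obtain ⟨β3, hβ3, h3⟩ := ih u' v' α' hle' hv' hγα'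
        exact ⟨β3 ++ [a], mem_Iw_concat.mpr ⟨u', hβ3, huu'⟩, colexLe_concat_iff.mpr h3⟩
      · have hαγ : colexLt (α' ++ [c]) (γ' ++ [a]) := colexLt_concat_iff.mpr (Or.inl hac)
        exact (colexLt_irrefl _ (colexLt_of_lt_of_le hαγ hγα)).elim

/-- Key lemma 3/4: if `u ≤ v`, `β ∈ I_u`, `γ ∈ I_v` and `γ ⪯ β`, then
`γ ∈ I_u` and `β ∈ I_v`. -/
lemma keyL34 {N : NFA' A Q} {le : Q → Q → Prop} (hc : IsColexNFA N le) :
    ∀ (β : List A) (u v : Q) (γ : List A), le u v → u ∈ N.Iw β → v ∈ N.Iw γ →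
      colexLe γ β → u ∈ N.Iw γ ∧ v ∈ N.Iw β := by
  intro β
  induction β using List.reverseRecOn with
  | nil =>
    intro u v γ _ hu hv hγβ
    rcases hγβ with h | rfl
    · exact absurd h (not_colexLt_nil γ)
    · exact ⟨hu, hv⟩
  | append_singleton β' a ih =>
    intro u v γ hle hu hv hγβ
    rcases hγβ with hlt | rfl
    · by_cases huv : u = v
      · subst huv; exact ⟨hv, hu⟩
      obtain ⟨u', hu', huu'⟩ := mem_Iw_concat.mp hu
      rcases γ.eq_nil_or_concat' with rfl | ⟨γ', b, rfl⟩
      · exact (not_le_start hc hle huv huu' (mem_Iw_nil.mp hv)).elim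
      obtain ⟨v', hv', hvv'⟩ := mem_Iw_concat.mp hv
      have hab : a ≤ b := lam_le hc hle huv huu' hvv'
      rcases colexLt_concat_iff.mp hlt with hba | ⟨heq, hγβ'⟩
      · exact absurd hba (not_lt_of_ge hab)
      · subst heq
        have hle' : le u' v' := hc.ax2 _ u v u' v' huu' hvv' hle huv
        obtain ⟨h1, h2⟩ := ih u' v' γ' hle' hu' hv' (Or.inl hγβ')
        exact ⟨mem_Iw_concat.mpr ⟨u', h1, huu'⟩, mem_Iw_concat.mpr ⟨v', h2, hvv'⟩⟩
    · exact ⟨hu, hv⟩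

end Aux

/-- `S(α)` is downward closed, `L(α)` is upward closed, the sets
`I_α`, `S(α)`, `L(α)` are pairwise disjoint, and for every `v ∈ I_α`, any
`u < v` lies in `I_α ∪ S(α)` and any `z > v` lies in `I_α ∪ L(α)`. -/
theorem stmt_19 {A Q : Type} [LinearOrder A] [Fintype A] [Fintype Q]
    (N : NFA' A Q) (hreach : N.Reachable) (huse : N.Useful)
    (le : Q → Q → Prop) (hcolex : IsColexNFA N le) (α : List A) :
    (∀ u v : Q, le u v → v ∈ SsetN N α → u ∈ SsetN N α) ∧
    (∀ u v : Q, le u v → u ∈ LsetN N α → v ∈ LsetN N α) ∧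
    (N.Iw α ∩ SsetN N α = ∅ ∧ N.Iw α ∩ LsetN N α = ∅ ∧
      SsetN N α ∩ LsetN N α = ∅) ∧
    (∀ v ∈ N.Iw α,
      (∀ u : Q, le u v → u ≠ v → u ∈ N.Iw α ∪ SsetN N α) ∧
      (∀ z : Q, le v z → v ≠ z → z ∈ N.Iw α ∪ LsetN N α)) := by
  refine ⟨?_, ?_, ⟨?_, ?_, ?_⟩, ?_⟩
  · -- S(α) downward closed
    intro u v huv hvS β hβ
    by_contra hno
    have hαβ : colexLe α β := by
      rcases colex_trichot β α with h | rfl | h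
      · exact absurd h hno
      · exact Or.inr rfl
      · exact Or.inl h
    obtain ⟨γ, hγ, hαγ⟩ := keyL1 hreach hcolex β u v α huv hβ hαβ
    exact colexLt_irrefl α (colexLt_of_le_of_lt hαγ (hvS γ hγ))
  · -- L(α) upward closed
    intro u v huv huL γ hγ
    by_contra hno
    have hγα : colexLe γ α := by
      rcases colex_trichot α γ with h | rfl | h
      · exact absurd h hno
      · exact Or.inr rfl
      · exact Or.inl h
    obtain ⟨β, hβ, hβα⟩ := keyL2 hreach hcolex γ u v α huv hγ hγα
    exact colexLt_irrefl α (colexLt_of_lt_of_le (huL β hβ) hβα)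
  · -- I ∩ S = ∅
    rw [Set.eq_empty_iff_forall_notMem]
    rintro v ⟨hvI, hvS⟩
    exact colexLt_irrefl α (hvS α hvI)
  · -- I ∩ L = ∅
    rw [Set.eq_empty_iff_forall_notMem]
    rintro v ⟨hvI, hvL⟩
    exact colexLt_irrefl α (hvL α hvI)
  · -- S ∩ L = ∅
    rw [Set.eq_empty_iff_forall_notMem]
    rintro v ⟨hvS, hvL⟩
    obtain ⟨β, hβ⟩ := hreach v
    exact colexLt_irrefl α (colexLt_trans (hvL β hβ) (hvS β hβ))
  · -- statements about I_α
    intro v hv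
    constructor
    · intro u hle hne
      by_cases huS : u ∈ SsetN N α
      · exact Or.inr huS
      have : ∃ β, u ∈ N.Iw β ∧ ¬ colexLt β α := by
        simpa [SsetN, NFA'.Iq, not_forall] using huS
      obtain ⟨β, hβ, hno⟩ := this
      have hαβ : colexLe α β := by
        rcases colex_trichot β α with h | rfl | h
        · exact absurd h hno
        · exact Or.inr rfl
        · exact Or.inl h
      exact Or.inl (keyL34 hcolex β u v α hle hβ hv hαβ).1
    · intro z hle hne
      by_cases hzL : z ∈ LsetN N α
      · exact Or.inr hzL
      have : ∃ γ, z ∈ N.Iw γ ∧ ¬ colexLt α γ := by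
        simpa [LsetN, NFA'.Iq, not_forall] using hzL
      obtain ⟨γ, hγ, hno⟩ := this
      have hγα : colexLe γ α := by
        rcases colex_trichot α γ with h | rfl | h
        · exact absurd h hno
        · exact Or.inr rfl
        · exact Or.inl h
      exact Or.inl (keyL34 hcolex α v z γ hle hv hγ hγα).2
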